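/- arXiv:1305.2545 — 4 statements merged into one kernel-verified Lean document; each statement's English description precedes it below -/
import Mathlib

section
/- If 0 < ε, 0 < p, ε/p ≤ 1/2 and p ≤ 1/2, then p·ln(p/(p−ε)) + (1−p)·ln((1−p)/(1−p+ε)) ≤ 2ε²/p. -/
/-!
The first term is `-p log (1 - ε/p)`, which the second-order Taylor bound of `log` at `1` makes
at most `ε + ε²/(2(p - ε))`; the second is at most `(1 - p)((1 - p)/(1 - p + ε) - 1)
= -ε + ε²/(1 - p + ε)` by `log y ≤ y - 1`. The linear terms cancel, and `2ε ≤ p ≤ 1/2` bounds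
each remaining quadratic term by `ε²/p`.
-/

namespace Real

theorem abs_neg_log_one_sub_sub_self_le {x : ℝ} (hx : |x| < 1) :
    |-log (1 - x) - x| ≤ x ^ 2 / (2 * (1 - |x|)) := by
  have hz : ‖(x : ℂ)‖ < 1 := by rwa [Complex.norm_real, Real.norm_eq_abs]
  have h := Complex.norm_log_one_sub_inv_sub_self_le hz
  have hpos : 0 < 1 - x := by linarith [le_abs_self x]
  rw [← Complex.ofReal_one, ← Complex.ofReal_sub, ← Complex.ofReal_inv,
    ← Complex.ofReal_log (inv_nonneg.2 hpos.le), ← Complex.ofReal_sub, Complex.norm_real,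
    Real.norm_eq_abs, Complex.norm_real, Real.norm_eq_abs, Real.log_inv, sq_abs] at h
  rwa [mul_comm 2, ← div_div, div_eq_mul_inv]

theorem mul_log_div_sub_le {p ε : ℝ} (hε : 0 ≤ ε) (hεp : ε < p) :
    p * log (p / (p - ε)) ≤ ε + ε ^ 2 / (2 * (p - ε)) := by
  have hp : 0 < p := hε.trans_lt hεp
  have hx : |ε / p| < 1 := by
    rw [abs_of_nonneg (by positivity), div_lt_one hp]
    exact hεp
  have h := (le_abs_self _).trans (abs_neg_log_one_sub_sub_self_le hx)
  rw [abs_of_nonneg (by positivity)] at h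
  have hlog : log (p / (p - ε)) = -log (1 - ε / p) := by
    rw [← log_inv, one_sub_div hp.ne', inv_div]
  have key : p * (ε / p + (ε / p) ^ 2 / (2 * (1 - ε / p))) = ε + ε ^ 2 / (2 * (p - ε)) := by
    field_simp
  rw [hlog, ← key]
  gcongr
  linarith

theorem mul_log_div_add_le {q ε : ℝ} (hq : 0 < q) (hqε : 0 < q + ε) :
    q * log (q / (q + ε)) ≤ -ε + ε ^ 2 / (q + ε) := by
  have h := log_le_sub_one_of_pos (div_pos hq hqε)
  have key : q * (q / (q + ε) - 1) = -ε + ε ^ 2 / (q + ε) := by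
    field_simp
    ring
  rw [← key]
  gcongr

end Real

/-- KL-divergence bound between Bernoulli-type means `p - ε` and `p`. -/
theorem kl_bernoulli_bound (p ε : ℝ) (hε : 0 < ε) (hp : 0 < p)
    (hratio : ε / p ≤ 1 / 2) (hp2 : p ≤ 1 / 2) :
    p * Real.log (p / (p - ε)) + (1 - p) * Real.log ((1 - p) / (1 - p + ε))
      ≤ 2 * ε ^ 2 / p := by
  have hεp : 2 * ε ≤ p := by rw [div_le_iff₀ hp] at hratio; linarith
  have h₁ := Real.mul_log_div_sub_le hε.le (by linarith : ε < p)
  have h₂ := Real.mul_log_div_add_le (by linarith : 0 < 1 - p) (by linarith : 0 < 1 - p + ε)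
  have h₃ : ε ^ 2 / (2 * (p - ε)) ≤ ε ^ 2 / p := by gcongr; linarith
  have h₄ : ε ^ 2 / (1 - p + ε) ≤ ε ^ 2 / p := by gcongr; linarith
  linarith [mul_div_assoc 2 (ε ^ 2) p]
end

section
/- Define rad(ν,N) = √(C·ν/N) + C/N with C > 0. If ν, ν̂ ∈ [0,1] satisfy |ν − ν̂| ≤ rad(ν̂, N), then rad(ν̂, N) ≤ 3·rad(ν, N). -/
noncomputable def rad (C ν N : ℝ) : ℝ := Real.sqrt (C * ν / N) + C / N

/- Multiplying `x - y ≤ √(a x) + a` by `a` gives `s² ≤ t² + a s + a²` for `s = √(a x)`, `t = √(a y)`,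
and this quadratic inequality forces `s ≤ t + 2a`: otherwise `s (s - a) > (t + 2a)(t + a) ≥ t² + a²`. -/
theorem Real.sqrt_mul_le_sqrt_mul_add_two_mul_of_sub_le {a x y : ℝ} (ha : 0 ≤ a)
    (h : x - y ≤ √(a * x) + a) : √(a * x) ≤ √(a * y) + 2 * a := by
  have hsq : √(a * x) ^ 2 ≤ √(a * y) ^ 2 + a * √(a * x) + a ^ 2 := by
    rw [Real.sq_sqrt', Real.sq_sqrt']
    refine max_le ?_ (by positivity)
    nlinarith [le_max_left (a * y) 0, mul_le_mul_of_nonneg_left h ha]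
  nlinarith [Real.sqrt_nonneg (a * x), Real.sqrt_nonneg (a * y)]

theorem rad_eq_sqrt_mul_add (C ν N : ℝ) : rad C ν N = √(C / N * ν) + C / N := by
  rw [rad, mul_div_right_comm]

theorem rad_comparison_general (C : ℝ) (hC : 0 < C) (N : ℝ) (hN : 0 < N)
    (ν νhat : ℝ) (h : |ν - νhat| ≤ rad C νhat N) :
    rad C νhat N ≤ 3 * rad C ν N := by
  have ha : 0 ≤ C / N := by positivity
  simp only [rad_eq_sqrt_mul_add] at h ⊢
  have hsqrt := Real.sqrt_mul_le_sqrt_mul_add_two_mul_of_sub_le ha (abs_sub_le_iff.1 h).2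
  linarith [Real.sqrt_nonneg (C / N * ν)]

/-- If `|ν − ν̂| ≤ rad(ν̂,N)` for `ν, ν̂ ∈ [0,1]` then `rad(ν̂,N) ≤ 3·rad(ν,N)`. -/
theorem rad_comparison (C : ℝ) (hC : 0 < C) (N : ℝ) (hN : 0 < N)
    (ν νhat : ℝ) (hν : ν ∈ Set.Icc (0:ℝ) 1) (hνhat : νhat ∈ Set.Icc (0:ℝ) 1)
    (h : |ν - νhat| ≤ rad C νhat N) :
    rad C νhat N ≤ 3 * rad C ν N :=
  rad_comparison_general C hC N hN ν νhat h
end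

section
/- Consider the linear program: maximize ∑_{x∈X} ξ_x r(x) subject to ∑_{x∈X} ξ_x c_i(x) ≤ B for each resource i ∈ {1,…,d} and ξ_x ≥ 0, where X is finite, r(x) ∈ [0,1], c_i(x) ∈ [0,1], B > 0, and some resource i₀ satisfies c_{i₀}(x) = B/T for all x (the time resource), with T ≥ B. Then the optimal value of this LP equals sup over probability distributions D on X of LP(D) := r(D)·min_i (B / c_i(D)), where r(D) = ∑_x D(x) r(x) and c_i(D) = ∑_x D(x) c_i(x) (with the convention B/0 = T via the time-resource constraint). -/
/-!
For a probability distribution `D`, the quantity `min_i B / c_i(D)` is exactly the largest `t`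
for which `t • D` satisfies every budget constraint: a resource with `c_i(D) = 0` constrains
nothing, and the time resource already caps `t` at `T`, so reading `B / 0` as `T` changes
nothing. Hence every distribution `D` yields a feasible point of value `r(D) · min_i B / c_i(D)`,
and conversely a nonzero feasible `ξ` is `s • D` with `s = ∑ ξ` and `D = ξ / s`, where
feasibility says precisely that `s ≤ min_i B / c_i(D)`.
-/

open Finset

theorem le_ite_div_iff {a B T t : ℝ} (ha : 0 ≤ a) (hB : 0 ≤ B) (htT : t ≤ T) :
    t ≤ (if a = 0 then T else B / a) ↔ t * a ≤ B := by
  split_ifs with h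
  · simp [h, htT, hB]
  · exact le_div_iff₀ (lt_of_le_of_ne ha (Ne.symm h))

theorem mul_div_le_self_iff {t B T : ℝ} (hB : 0 < B) (hT : 0 < T) :
    t * (B / T) ≤ B ↔ t ≤ T := by
  rw [← mul_div_assoc, div_le_iff₀ hT, mul_comm t, mul_le_mul_iff_right₀ hB]

section DepletionTime

variable {X ι : Type*} [Fintype X] [Fintype ι]

/-- `min_i B / c_i(D)`, the time after which playing `D` exhausts the first resource. -/
noncomputable def depletionTime (B T : ℝ) (c : ι → X → ℝ) (i₀ : ι) (D : X → ℝ) : ℝ :=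
  univ.inf' ⟨i₀, mem_univ i₀⟩
    (fun i => if (∑ x, D x * c i x) = 0 then T else B / ∑ x, D x * c i x)

variable {B T : ℝ} {c : ι → X → ℝ} {i₀ : ι} {D : X → ℝ}

theorem le_depletionTime_iff (hc : ∀ i x, 0 ≤ c i x) (hB : 0 < B) (hT : 0 < T)
    (hi₀ : ∀ x, c i₀ x = B / T) (hD : D ∈ stdSimplex ℝ X) {t : ℝ} :
    t ≤ depletionTime B T c i₀ D ↔ ∀ i, t * ∑ x, D x * c i x ≤ B := by
  have hcD : ∀ i, 0 ≤ ∑ x, D x * c i x := fun i =>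
    sum_nonneg fun x _ => mul_nonneg (hD.1 x) (hc i x)
  have htime : ∑ x, D x * c i₀ x = B / T := by
    simp only [hi₀, ← sum_mul, hD.2, one_mul]
  have htime_term : (if ∑ x, D x * c i₀ x = 0 then T else B / ∑ x, D x * c i₀ x) = T := by
    rw [htime, if_neg (div_pos hB hT).ne', div_div_cancel₀ hB.ne']
  refine (le_inf'_iff _ _).trans ?_
  simp only [mem_univ, true_implies]
  constructor
  · intro h i
    have htT : t ≤ T := htime_term ▸ h i₀
    exact (le_ite_div_iff (hcD i) hB.le htT).1 (h i)
  · intro h i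
    have htT : t ≤ T := (mul_div_le_self_iff hB hT).1 (htime ▸ h i₀)
    exact (le_ite_div_iff (hcD i) hB.le htT).2 (h i)

theorem depletionTime_nonneg (hc : ∀ i x, 0 ≤ c i x) (hB : 0 < B) (hT : 0 < T)
    (hi₀ : ∀ x, c i₀ x = B / T) (hD : D ∈ stdSimplex ℝ X) :
    0 ≤ depletionTime B T c i₀ D :=
  (le_depletionTime_iff hc hB hT hi₀ hD).2 fun _ => by simpa using hB.le

theorem exists_feasible_value_eq_of_mem_stdSimplex (r : X → ℝ) (hc : ∀ i x, 0 ≤ c i x)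
    (hB : 0 < B) (hT : 0 < T) (hi₀ : ∀ x, c i₀ x = B / T) (hD : D ∈ stdSimplex ℝ X) :
    ∃ ξ : X → ℝ, (∀ x, 0 ≤ ξ x) ∧ (∀ i, ∑ x, ξ x * c i x ≤ B) ∧
      (∑ x, D x * r x) * depletionTime B T c i₀ D = ∑ x, ξ x * r x := by
  set t := depletionTime B T c i₀ D
  have hscale : ∀ f : X → ℝ, ∑ x, t * D x * f x = t * ∑ x, D x * f x := fun f => by
    simp only [mul_assoc, mul_sum]
  refine ⟨fun x => t * D x, fun x => mul_nonneg (depletionTime_nonneg hc hB hT hi₀ hD) (hD.1 x),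
    fun i => ?_, by rw [hscale, mul_comm]⟩
  rw [hscale]
  exact (le_depletionTime_iff hc hB hT hi₀ hD).1 le_rfl i

theorem exists_mem_stdSimplex_value_le_of_feasible [Nonempty X] {r ξ : X → ℝ}
    (hr : ∀ x, 0 ≤ r x) (hc : ∀ i x, 0 ≤ c i x) (hB : 0 < B) (hT : 0 < T)
    (hi₀ : ∀ x, c i₀ x = B / T) (hξ0 : ∀ x, 0 ≤ ξ x) (hξ : ∀ i, ∑ x, ξ x * c i x ≤ B) :
    ∃ D ∈ stdSimplex ℝ X, ∑ x, ξ x * r x ≤ (∑ x, D x * r x) * depletionTime B T c i₀ D := by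
  have hvalue_nonneg : ∀ D ∈ stdSimplex ℝ X, 0 ≤ ∑ x, D x * r x := fun D hD =>
    sum_nonneg fun x _ => mul_nonneg (hD.1 x) (hr x)
  rcases (sum_nonneg fun x _ => hξ0 x : 0 ≤ ∑ x, ξ x).eq_or_lt with hs_zero | hs_pos
  · classical
    obtain ⟨x₀⟩ := ‹Nonempty X›
    have hD := single_mem_stdSimplex ℝ x₀
    have hξ_zero : ∀ x ∈ univ, ξ x = 0 := (sum_eq_zero_iff_of_nonneg fun x _ => hξ0 x).1 hs_zero.symm
    refine ⟨_, hD, ?_⟩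
    rw [sum_eq_zero fun x hx => by rw [hξ_zero x hx, zero_mul]]
    exact mul_nonneg (hvalue_nonneg _ hD) (depletionTime_nonneg hc hB hT hi₀ hD)
  · set s := ∑ x, ξ x
    set D : X → ℝ := fun x => ξ x / s
    have hD : D ∈ stdSimplex ℝ X :=
      ⟨fun x => div_nonneg (hξ0 x) hs_pos.le, by rw [← sum_div, div_self hs_pos.ne']⟩
    have hξ_eq : ∀ f : X → ℝ, ∑ x, ξ x * f x = s * ∑ x, D x * f x := fun f => by
      rw [mul_sum]
      refine sum_congr rfl fun x _ => ?_
      simp only [D]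
      field_simp
    have hs_le : s ≤ depletionTime B T c i₀ D :=
      (le_depletionTime_iff hc hB hT hi₀ hD).2 fun i => hξ_eq (c i) ▸ hξ i
    refine ⟨D, hD, ?_⟩
    rw [hξ_eq r, mul_comm]
    exact mul_le_mul_of_nonneg_left hs_le (hvalue_nonneg D hD)

end DepletionTime

/-- The optimal value of the primal LP equals the supremum over probability distributions `D`
of `LP(D) = r(D) · min_i (B / c_i(D))`, where the time resource `i₀` has `c_{i₀}(x) = B/T`
(so the minimum is at most `T`; resources with zero consumption contribute `T` by convention). -/
theorem lp_primal_eq_sup_over_distributions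
    {X : Type*} [Fintype X] [Nonempty X] (d : ℕ)
    (r : X → ℝ) (c : Fin d → X → ℝ)
    (hr : ∀ x, r x ∈ Set.Icc (0:ℝ) 1) (hc : ∀ i x, c i x ∈ Set.Icc (0:ℝ) 1)
    (B T : ℝ) (hB : 0 < B) (hT : B ≤ T)
    (i₀ : Fin d) (hi₀ : ∀ x, c i₀ x = B / T) :
    sSup {v : ℝ | ∃ ξ : X → ℝ, (∀ x, 0 ≤ ξ x) ∧ (∀ i, ∑ x, ξ x * c i x ≤ B) ∧
        v = ∑ x, ξ x * r x}
      = sSup {v : ℝ | ∃ D : X → ℝ, (∀ x, 0 ≤ D x) ∧ (∑ x, D x = 1) ∧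
        v = (∑ x, D x * r x) *
          Finset.univ.inf' ⟨i₀, Finset.mem_univ i₀⟩
            (fun i : Fin d =>
              if (∑ x, D x * c i x) = 0 then T else B / ∑ x, D x * c i x)} := by
  have hT0 : 0 < T := hB.trans_le hT
  have hr0 : ∀ x, 0 ≤ r x := fun x => (hr x).1
  have hc0 : ∀ i x, 0 ≤ c i x := fun i x => (hc i x).1
  apply csSup_eq_csSup_of_forall_exists_le
  · rintro _ ⟨ξ, hξ0, hξ, rfl⟩
    obtain ⟨D, hD, hle⟩ := exists_mem_stdSimplex_value_le_of_feasible hr0 hc0 hB hT0 hi₀ hξ0 hξ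
    exact ⟨_, ⟨D, hD.1, hD.2, rfl⟩, hle⟩
  · rintro _ ⟨D, hD0, hD1, rfl⟩
    obtain ⟨ξ, hξ0, hξ, hvalue⟩ :=
      exists_feasible_value_eq_of_mem_stdSimplex r hc0 hB hT0 hi₀ ⟨hD0, hD1⟩
    exact ⟨_, ⟨ξ, hξ0, hξ, rfl⟩, hvalue.le⟩
end

section
/- In the LP setting above (finite X, rewards r(x) ∈ [0,1], consumptions c_i(x) ∈ [0,1], budgets B, time resource with c_{i₀}(x) = B/T), there exists a probability distribution D over X that attains the LP optimum sup_D LP(D) and additionally satisfies: (a) c_i(D) ≤ B/T for every resource i; (b) the support of D has size at most d. -/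
/-
Put `b = B / T`. Since `c_{i₀}(D) = b` for every distribution, the feasible distributions
`F = {D : c_i(D) ≤ b for all i}` all have `LP(D) = T · r(D)`. Conversely, every distribution `D`
can be rescaled onto the null arm, `D' = λ D + (1 - λ) δ_{x₀}` with `λ = min_i (B / c_i(D)) / T`,
which lands in `F` and has `T · r(D') = LP(D)`. So the LP optimum is `T · max_F r`.

The maximum of the linear functional `r` over the compact convex set `F` is attained at an extreme
point `D` (Krein–Milman applied to the exposed face of maximisers). If the support of `D` were
larger than the set of tight constraints, some nonzero `z` supported on it would be orthogonal to
every tight constraint, hence (through the time resource) have total mass `0`; then `D ± ε z ∈ F`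
for small `ε`, contradicting extremality. So `|supp D| ≤ #tight ≤ d`.
-/

open Finset Filter Topology

theorem IsCompact.exists_mem_extremePoints_forall_le {E : Type*} [AddCommGroup E] [Module ℝ E]
    [TopologicalSpace E] [T2Space E] [IsTopologicalAddGroup E] [ContinuousSMul ℝ E]
    [LocallyConvexSpace ℝ E] {s : Set E} (hs : IsCompact s) (hne : s.Nonempty)
    (l : StrongDual ℝ E) : ∃ x ∈ s.extremePoints ℝ, ∀ y ∈ s, l y ≤ l x := by
  obtain ⟨z, hzs, hz⟩ := hs.exists_isMaxOn hne l.continuous.continuousOn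
  have hface : IsExposed ℝ s {x ∈ s | ∀ y ∈ s, l y ≤ l x} := fun _ => ⟨l, rfl⟩
  obtain ⟨x, hx⟩ := (hface.isCompact hs).extremePoints_nonempty ⟨z, hzs, hz⟩
  exact ⟨x, hface.isExtreme.extremePoints_subset_extremePoints hx, (extremePoints_subset hx).2⟩

theorem exists_pos_add_smul_mem_and_sub_smul_mem {E : Type*} [AddCommGroup E] [Module ℝ E]
    {s : Set E} {D z : E} (h : ∀ᶠ t in 𝓝 (0 : ℝ), D + t • z ∈ s) :
    ∃ ε : ℝ, 0 < ε ∧ D + ε • z ∈ s ∧ D - ε • z ∈ s := by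
  have hneg : ∀ᶠ t in 𝓝 (0 : ℝ), D - t • z ∈ s := by
    simpa [sub_eq_add_neg] using (continuous_neg.tendsto' (0 : ℝ) 0 neg_zero).eventually h
  obtain ⟨ε, ⟨hε₁, hε₂⟩, hε⟩ :=
    ((h.and hneg).filter_mono nhdsWithin_le_nhds |>.and self_mem_nhdsWithin).exists
      (f := 𝓝[>] (0 : ℝ))
  exact ⟨ε, hε, hε₁, hε₂⟩

section Distributions

variable {X ι : Type*} [Fintype X]

theorem exists_ne_zero_forall_sum_mul_eq_zero (c : ι → X → ℝ) {s : Finset X} {t : Finset ι}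
    (hst : #t < #s) :
    ∃ z : X → ℝ, (∃ x ∈ s, z x ≠ 0) ∧ (∀ x ∉ s, z x = 0) ∧ ∀ i ∈ t, ∑ x, z x * c i x = 0 := by
  classical
  have hdep : ¬ LinearIndepOn ℝ (fun x (i : t) => c i x) (s : Set X) := fun hli => by
    have := hli.fintype_card_le_finrank
    simp only [Finset.coe_sort_coe, Fintype.card_coe, Module.finrank_fintype_fun_eq_card] at this
    omega
  obtain ⟨f, hf, x, hx, hfx⟩ : ∃ f : X → ℝ, ∑ x ∈ s, f x • (fun (i : t) => c i x) = 0 ∧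
      ∃ x ∈ s, f x ≠ 0 := by
    simpa [linearIndepOn_finset_iff] using hdep
  refine ⟨fun x => if x ∈ s then f x else 0, ⟨x, hx, by simpa [hx]⟩, fun x hx => if_neg hx,
    fun i hi => ?_⟩
  have := congrFun hf ⟨i, hi⟩
  simp only [Finset.sum_apply, Pi.smul_apply, smul_eq_mul, Pi.zero_apply] at this
  simpa [ite_mul, Finset.sum_ite_mem] using this

theorem sum_add_smul_mul (D z f : X → ℝ) (t : ℝ) :
    ∑ x, (D + t • z) x * f x = ∑ x, D x * f x + t * ∑ x, z x * f x := by
  simp only [Pi.add_apply, Pi.smul_apply, smul_eq_mul, add_mul, sum_add_distrib, mul_sum, mul_assoc]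

theorem sum_smul_add_smul_single_mul [DecidableEq X] (D f : X → ℝ) (a b : ℝ) (x₀ : X) :
    ∑ x, (a • D + b • Pi.single x₀ 1 : X → ℝ) x * f x = a * ∑ x, D x * f x + b * f x₀ := by
  simp [add_mul, sum_add_distrib, mul_sum, mul_assoc, Pi.single_apply]

def budgetFeasible (c : ι → X → ℝ) (b : ℝ) : Set (X → ℝ) :=
  stdSimplex ℝ X ∩ {D | ∀ i, ∑ x, D x * c i x ≤ b}

theorem isCompact_budgetFeasible (c : ι → X → ℝ) (b : ℝ) : IsCompact (budgetFeasible c b) := by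
  refine (isCompact_stdSimplex ℝ X).inter_right ?_
  simp only [Set.ofPred_forall]
  exact isClosed_iInter fun i => isClosed_le (by fun_prop) continuous_const

theorem single_mem_budgetFeasible [DecidableEq X] {c : ι → X → ℝ} {b : ℝ} {x₀ : X}
    (hx₀ : ∀ i, c i x₀ ≤ b) : Pi.single x₀ 1 ∈ budgetFeasible c b :=
  ⟨single_mem_stdSimplex ℝ x₀, fun i => by simpa [Pi.single_apply] using hx₀ i⟩

theorem eventually_add_smul_mem_budgetFeasible [Finite ι] {c : ι → X → ℝ} {b : ℝ} {D z : X → ℝ}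
    (hD : D ∈ budgetFeasible c b) (hz : ∀ x, D x = 0 → z x = 0) (hz₁ : ∑ x, z x = 0)
    (hzc : ∀ i, ∑ x, D x * c i x = b → ∑ x, z x * c i x = 0) :
    ∀ᶠ t in 𝓝 (0 : ℝ), D + t • z ∈ budgetFeasible c b := by
  obtain ⟨⟨hD₀, hD₁⟩, hDc⟩ := hD
  have hline : ∀ a k : ℝ, Tendsto (fun t : ℝ => a + t * k) (𝓝 0) (𝓝 a) := fun a k => by
    simpa using ((tendsto_id (x := 𝓝 (0 : ℝ))).mul_const k).const_add a
  refine ((eventually_all.2 fun x => ?_).and (eventually_all.2 fun i => ?_)).mono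
    fun t ⟨hpos, hc⟩ => ⟨⟨hpos, ?_⟩, hc⟩
  · rcases (hD₀ x).eq_or_lt with hx | hx
    · exact Eventually.of_forall fun t => by simp [← hx, hz x hx.symm]
    · exact ((hline (D x) (z x)).eventually_const_lt hx).mono fun t ht => ht.le
  · rcases (hDc i).eq_or_lt with hi | hi
    · exact Eventually.of_forall fun t => by rw [sum_add_smul_mul, hi, hzc i hi, mul_zero, add_zero]
    · simp only [sum_add_smul_mul]
      exact ((hline _ _).eventually_lt_const hi).mono fun t ht => ht.le
  · simp [sum_add_distrib, ← mul_sum, hD₁, hz₁]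

theorem card_support_le_card_tight_of_mem_extremePoints [Fintype ι] {c : ι → X → ℝ} {b : ℝ}
    (hb : b ≠ 0) {i₀ : ι} (hi₀ : ∀ x, c i₀ x = b) {D : X → ℝ}
    (hD : D ∈ (budgetFeasible c b).extremePoints ℝ) :
    #{x | D x ≠ 0} ≤ #{i | ∑ x, D x * c i x = b} := by
  by_contra! hcard
  obtain ⟨z, ⟨x, -, hzx⟩, hzD, hzc⟩ := exists_ne_zero_forall_sum_mul_eq_zero c hcard
  simp only [mem_filter, mem_univ, true_and, not_not] at hzD hzc
  have hz₁ : ∑ x, z x = 0 := by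
    have := hzc i₀ (by simp [hi₀, ← sum_mul, hD.1.1.2])
    simpa [hi₀, ← sum_mul, hb] using this
  obtain ⟨ε, hε, hplus, hminus⟩ := exists_pos_add_smul_mem_and_sub_smul_mem
    (eventually_add_smul_mem_budgetFeasible hD.1 hzD hz₁ hzc)
  have hmid : D ∈ openSegment ℝ (D + ε • z) (D - ε • z) :=
    ⟨1 / 2, 1 / 2, by norm_num, by norm_num, by norm_num, by module⟩
  have hz : z = 0 :=
    (smul_eq_zero.1 (add_eq_left.1 (hD.2 hplus hminus hmid))).resolve_left hε.ne'
  exact hzx (congrFun hz x)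

end Distributions

section LinearProgram

variable {X ι : Type*} [Fintype X] [Fintype ι]

/-- `min_i B / c_i(D)`, the number of rounds `D` can be played before some budget runs out; a
resource that `D` does not consume contributes `T` instead of the junk value `B / 0 = 0`. -/
noncomputable def exhaustionTime (c : ι → X → ℝ) (B T : ℝ) (i₀ : ι) (D : X → ℝ) : ℝ :=
  univ.inf' ⟨i₀, mem_univ i₀⟩ fun i =>
    if ∑ x, D x * c i x = 0 then T else B / ∑ x, D x * c i x

noncomputable def lpValue (r : X → ℝ) (c : ι → X → ℝ) (B T : ℝ) (i₀ : ι) (D : X → ℝ) : ℝ :=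
  (∑ x, D x * r x) * exhaustionTime c B T i₀ D

variable {r : X → ℝ} {c : ι → X → ℝ} {B T : ℝ} {i₀ : ι} {D : X → ℝ}

theorem exhaustionTime_le (hB : 0 < B) (hT : 0 < T) (hi₀ : ∀ x, c i₀ x = B / T)
    (hD : ∑ x, D x = 1) : exhaustionTime c B T i₀ D ≤ T := by
  refine (inf'_le _ (mem_univ i₀)).trans_eq ?_
  simp [hi₀, ← sum_mul, hD, hB.ne', hT.ne']

theorem exhaustionTime_pos (hB : 0 < B) (hT : 0 < T) (hc : ∀ i x, 0 ≤ c i x)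
    (hD : ∀ x, 0 ≤ D x) : 0 < exhaustionTime c B T i₀ D := by
  refine (lt_inf'_iff _).2 fun i _ => ?_
  split_ifs with h
  · exact hT
  · exact div_pos hB ((sum_nonneg fun x _ => mul_nonneg (hD x) (hc i x)).lt_of_ne' h)

theorem exhaustionTime_mul_le (hB : 0 < B) (hc : ∀ i x, 0 ≤ c i x) (hD : ∀ x, 0 ≤ D x) (i : ι) :
    exhaustionTime c B T i₀ D * ∑ x, D x * c i x ≤ B := by
  rcases (sum_nonneg fun x _ => mul_nonneg (hD x) (hc i x)).eq_or_lt with h | h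
  · rw [← h, mul_zero]
    exact hB.le
  · rw [← le_div_iff₀ h]
    exact (inf'_le _ (mem_univ i)).trans_eq (if_neg h.ne')

theorem exhaustionTime_eq_of_mem_budgetFeasible (hB : 0 < B) (hT : 0 < T)
    (hc : ∀ i x, 0 ≤ c i x) (hi₀ : ∀ x, c i₀ x = B / T) (hD : D ∈ budgetFeasible c (B / T)) :
    exhaustionTime c B T i₀ D = T := by
  refine (exhaustionTime_le hB hT hi₀ hD.1.2).antisymm (le_inf' _ _ fun i _ => ?_)
  split_ifs with h
  · rfl
  · have hpos : 0 < ∑ x, D x * c i x :=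
      (sum_nonneg fun x _ => mul_nonneg (hD.1.1 x) (hc i x)).lt_of_ne' h
    rw [le_div_iff₀ hpos, mul_comm, ← le_div_iff₀ hT]
    exact hD.2 i

theorem exists_mem_budgetFeasible_lpValue_eq [DecidableEq X] (hB : 0 < B) (hT : 0 < T)
    (hc : ∀ i x, 0 ≤ c i x) (hi₀ : ∀ x, c i₀ x = B / T) {x₀ : X} (hr₀ : r x₀ = 0)
    (hc₀ : ∀ i, i ≠ i₀ → c i x₀ = 0) (hD : D ∈ stdSimplex ℝ X) :
    ∃ D' ∈ budgetFeasible c (B / T), lpValue r c B T i₀ D = T * ∑ x, D' x * r x := by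
  set m := exhaustionTime c B T i₀ D
  have hm₀ : 0 < m := exhaustionTime_pos hB hT hc hD.1
  have hm₁ : m / T ≤ 1 := (div_le_one hT).2 (exhaustionTime_le hB hT hi₀ hD.2)
  refine ⟨(m / T) • D + (1 - m / T) • Pi.single x₀ 1, ⟨?_, fun i => ?_⟩, ?_⟩
  · exact convex_stdSimplex ℝ X hD (single_mem_stdSimplex ℝ x₀) (by positivity)
      (sub_nonneg.2 hm₁) (by ring)
  · rw [sum_smul_add_smul_single_mul]
    by_cases hi : i = i₀
    · subst hi
      simp only [hi₀, ← sum_mul, hD.2]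
      exact (by ring : _ = B / T).le
    · rw [hc₀ i hi, mul_zero, add_zero, div_mul_eq_mul_div]
      exact div_le_div_of_nonneg_right (exhaustionTime_mul_le hB hc hD.1 i) hT.le
  · rw [sum_smul_add_smul_single_mul, hr₀, mul_zero, add_zero]
    change (∑ x, D x * r x) * m = _
    field_simp

theorem isGreatest_lpValue [DecidableEq X] (hB : 0 < B) (hT : 0 < T)
    (hc : ∀ i x, 0 ≤ c i x) (hi₀ : ∀ x, c i₀ x = B / T) {x₀ : X} (hr₀ : r x₀ = 0)
    (hc₀ : ∀ i, i ≠ i₀ → c i x₀ = 0) (hD : D ∈ budgetFeasible c (B / T))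
    (hmax : ∀ D' ∈ budgetFeasible c (B / T), ∑ x, D' x * r x ≤ ∑ x, D x * r x) :
    IsGreatest {v | ∃ D' : X → ℝ, (∀ x, 0 ≤ D' x) ∧ (∑ x, D' x = 1) ∧ v = lpValue r c B T i₀ D'}
      (lpValue r c B T i₀ D) := by
  refine ⟨⟨D, hD.1.1, hD.1.2, rfl⟩, ?_⟩
  rintro _ ⟨D', hD'₀, hD'₁, rfl⟩
  obtain ⟨D'', hD'', hval⟩ :=
    exists_mem_budgetFeasible_lpValue_eq hB hT hc hi₀ hr₀ hc₀ ⟨hD'₀, hD'₁⟩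
  rw [hval, lpValue, exhaustionTime_eq_of_mem_budgetFeasible hB hT hc hi₀ hD, mul_comm _ T]
  exact mul_le_mul_of_nonneg_left (hmax D'' hD'') hT.le

end LinearProgram

theorem exists_lp_perfect_distribution_general
    {X : Type*} [Fintype X] (d : ℕ)
    (r : X → ℝ) (c : Fin d → X → ℝ)
    (hc : ∀ i x, c i x ∈ Set.Icc (0:ℝ) 1)
    (B T : ℝ) (hB : 0 < B) (hT : B ≤ T)
    (i₀ : Fin d) (hi₀ : ∀ x, c i₀ x = B / T)
    (x₀ : X) (hr₀ : r x₀ = 0) (hc₀ : ∀ i, i ≠ i₀ → c i x₀ = 0) :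
    ∃ D : X → ℝ, (∀ x, 0 ≤ D x) ∧ (∑ x, D x = 1) ∧
      ((∑ x, D x * r x) *
          Finset.univ.inf' ⟨i₀, Finset.mem_univ i₀⟩
            (fun i : Fin d =>
              if (∑ x, D x * c i x) = 0 then T else B / ∑ x, D x * c i x)
        = sSup {v : ℝ | ∃ D' : X → ℝ, (∀ x, 0 ≤ D' x) ∧ (∑ x, D' x = 1) ∧
            v = (∑ x, D' x * r x) *
              Finset.univ.inf' ⟨i₀, Finset.mem_univ i₀⟩
                (fun i : Fin d =>
                  if (∑ x, D' x * c i x) = 0 then T else B / ∑ x, D' x * c i x)}) ∧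
      (∀ i, ∑ x, D x * c i x ≤ B / T) ∧
      Set.ncard {x | D x ≠ 0} ≤ d := by
  classical
  have hT₀ : 0 < T := hB.trans_le hT
  have hx₀ : ∀ i, c i x₀ ≤ B / T := fun i => by
    rcases eq_or_ne i i₀ with rfl | hi
    · exact (hi₀ x₀).le
    · exact (hc₀ i hi).trans_le (by positivity)
  obtain ⟨D, hDext, hDmax⟩ :=
    (isCompact_budgetFeasible c (B / T)).exists_mem_extremePoints_forall_le
      ⟨_, single_mem_budgetFeasible hx₀⟩ (Fintype.linearCombination ℝ r).toContinuousLinearMap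
  have hD := extremePoints_subset hDext
  refine ⟨D, hD.1.1, hD.1.2, ?_, hD.2, ?_⟩
  · refine (isGreatest_lpValue hB hT₀ (fun i x => (hc i x).1) hi₀ hr₀ hc₀ hD ?_).csSup_eq.symm
    simpa [Fintype.linearCombination_apply] using hDmax
  · calc Set.ncard {x | D x ≠ 0} = #{x | D x ≠ 0} := by
          simp [← Set.ncard_coe_finset]
      _ ≤ #{i | ∑ x, D x * c i x = B / T} :=
          card_support_le_card_tight_of_mem_extremePoints (by positivity) hi₀ hDext
      _ ≤ d := (card_filter_le _ _).trans_eq (card_fin d)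

/-- Existence of an "LP-perfect" distribution: a distribution `D` attaining the LP optimum
with `c_i(D) ≤ B/T` for every resource `i` and support of size at most `d`.
A null arm `x₀` (zero reward, zero consumption of every resource except time `i₀`) is available. -/
theorem exists_lp_perfect_distribution
    {X : Type*} [Fintype X] [Nonempty X] (d : ℕ)
    (r : X → ℝ) (c : Fin d → X → ℝ)
    (hr : ∀ x, r x ∈ Set.Icc (0:ℝ) 1) (hc : ∀ i x, c i x ∈ Set.Icc (0:ℝ) 1)
    (B T : ℝ) (hB : 0 < B) (hT : B ≤ T)
    (i₀ : Fin d) (hi₀ : ∀ x, c i₀ x = B / T)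
    (x₀ : X) (hr₀ : r x₀ = 0) (hc₀ : ∀ i, i ≠ i₀ → c i x₀ = 0) :
    ∃ D : X → ℝ, (∀ x, 0 ≤ D x) ∧ (∑ x, D x = 1) ∧
      ((∑ x, D x * r x) *
          Finset.univ.inf' ⟨i₀, Finset.mem_univ i₀⟩
            (fun i : Fin d =>
              if (∑ x, D x * c i x) = 0 then T else B / ∑ x, D x * c i x)
        = sSup {v : ℝ | ∃ D' : X → ℝ, (∀ x, 0 ≤ D' x) ∧ (∑ x, D' x = 1) ∧
            v = (∑ x, D' x * r x) *
              Finset.univ.inf' ⟨i₀, Finset.mem_univ i₀⟩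
                (fun i : Fin d =>
                  if (∑ x, D' x * c i x) = 0 then T else B / ∑ x, D' x * c i x)}) ∧
      (∀ i, ∑ x, D x * c i x ≤ B / T) ∧
      Set.ncard {x | D x ≠ 0} ≤ d :=
  exists_lp_perfect_distribution_general d r c hc B T hB hT i₀ hi₀ x₀ hr₀ hc₀
end
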